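/- arXiv:2604.12333 — 2 statements merged into one kernel-verified Lean document; each statement's English description precedes it below -/
import Mathlib

section
/- Let f : D(0,1) → ℂ be holomorphic on the open unit disc with |f(z)| ≤ M for all z, and suppose f(a) = 1 and f(b) = 0 for two points a, b ∈ D(0,1/2). Then dist(a,b) = |a − b| ≥ c/M for some absolute constant c > 0. In particular, |a − b| cannot tend to 0 while M stays bounded. -/
open Metric Complex

/-- Schwarz-lemma-type separation: there is an absolute constant `c > 0` such that
whenever `f` is holomorphic on the unit disc with `|f| ≤ M` (`M ≥ 1`), `f(a) = 1`
and `f(b) = 0` for points `a, b` in the disc of radius `1/2`, then `|a − b| ≥ c/M`. -/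
theorem schwarz_separation :
    ∃ c : ℝ, 0 < c ∧ ∀ (M : ℝ), 1 ≤ M → ∀ f : ℂ → ℂ,
      DifferentiableOn ℂ f (Metric.ball (0 : ℂ) 1) →
      (∀ z ∈ Metric.ball (0 : ℂ) 1, ‖f z‖ ≤ M) →
      ∀ a ∈ Metric.ball (0 : ℂ) (1 / 2), ∀ b ∈ Metric.ball (0 : ℂ) (1 / 2),
        f a = 1 → f b = 0 → c / M ≤ dist a b := by
  refine ⟨1/4, by norm_num, fun M hM f hd hb a ha b hbmem hfa hfb => ?_⟩
  have hMpos : (0 : ℝ) < M := lt_of_lt_of_le one_pos hM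
  -- derivative bound on the half ball
  have hderiv : ∀ z ∈ ball (0 : ℂ) (1/2), ‖deriv f z‖ ≤ 4 * M := by
    intro z hz
    have hzlt : ‖z‖ < 1/2 := by simpa [mem_ball, dist_eq_norm] using hz
    have hsub : closedBall z (1/4) ⊆ ball (0 : ℂ) 1 := by
      intro w hw
      have hw' : ‖w - z‖ ≤ 1/4 := by simpa [mem_closedBall, dist_eq_norm] using hw
      have : ‖w‖ ≤ ‖w - z‖ + ‖z‖ := by
        simpa using norm_add_le (w - z) z
      simp only [mem_ball, dist_eq_norm, sub_zero]
      linarith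
    have hdc : DiffContOnCl ℂ f (ball z (1/4)) := by
      refine DifferentiableOn.diffContOnCl ?_
      rw [closure_ball z (by norm_num : (1/4 : ℝ) ≠ 0)]
      exact hd.mono hsub
    have := norm_deriv_le_of_forall_mem_sphere_norm_le (by norm_num : (0:ℝ) < 1/4) hdc
      (fun w hw => hb w (hsub (sphere_subset_closedBall hw)))
    calc ‖deriv f z‖ ≤ M / (1/4) := this
      _ = 4 * M := by ring
  -- mean value inequality on the convex half ball
  have hconv : Convex ℝ (ball (0 : ℂ) (1/2)) := convex_ball 0 (1/2)
  have hmv : ‖f b - f a‖ ≤ 4 * M * ‖b - a‖ := by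
    refine hconv.norm_image_sub_le_of_norm_deriv_le (fun x hx => ?_) hderiv ha hbmem
    exact hd.differentiableAt (isOpen_ball.mem_nhds
      (ball_subset_ball (by norm_num) hx))
  rw [hfa, hfb] at hmv
  simp only [zero_sub, norm_neg, norm_one] at hmv
  have hdist : dist a b = ‖b - a‖ := by rw [dist_comm, dist_eq_norm]
  rw [hdist, div_le_iff₀ hMpos]
  nlinarith [norm_nonneg (b - a)]
end

section
/- Let G : X × X → ℝ ∪ {−∞} be a kernel on a compact metric space, smooth off the diagonal, such that ϱ(x,y) := G(x,y) − log dist(x,y) extends to a Lipschitz function on X × X with Lipschitz constant Λ. Fix β > 0, γ ∈ (0,1], and m ≥ 2. Let p₁,…,p_m and q₁,…,q_m be points with dist(p_j, p_k) ≥ β m^{−1/γ} and dist(q_j, q_k) ≥ β m^{−1/γ} for j ≠ k, and dist(p_j, q_j) ≤ m^{−2/γ} for all j. Then for each j ≠ k, |G(p_j,p_k) − G(q_j,q_k)| ≤ C(β, Λ, γ) · m^{−1/γ}, and consequently |(1/m²)Σ_{j≠k} G(p_j,p_k) − (1/m²)Σ_{j≠k} G(q_j,q_k)| ≤ C(β,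 Λ, γ) · m^{−1/γ}. -/
lemma abs_log_sub_log_le_aux {a b c : ℝ} (hc : 0 < c) (ha : c ≤ a) (hb : c ≤ b) :
    |Real.log a - Real.log b| ≤ |a - b| / c := by
  wlog h : b ≤ a generalizing a b
  · rw [abs_sub_comm, abs_sub_comm a b]; exact this hb ha (le_of_not_ge h)
  have ha0 : 0 < a := hc.trans_le ha
  have hb0 : 0 < b := hc.trans_le hb
  rw [abs_of_nonneg (sub_nonneg.2 (Real.log_le_log hb0 h)),
    abs_of_nonneg (sub_nonneg.2 h), ← Real.log_div ha0.ne' hb0.ne']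
  calc Real.log (a / b) ≤ a / b - 1 := Real.log_le_sub_one_of_pos (div_pos ha0 hb0)
    _ = (a - b) / b := by field_simp
    _ ≤ (a - b) / c := by gcongr

/-- Stability of the Green kernel and of discrete energies: if
`G(x,y) = log dist(x,y) + ϱ(x,y)` with `ϱ` Lipschitz (constant `Λ`), the space has
diameter ≤ 1, and `p, q` are two configurations of `m` points, each `β m^{-1/γ}`
separated, with `dist(p_j, q_j) ≤ m^{-2/γ}`, then each `|G(p_j,p_k) − G(q_j,q_k)|`
and the difference of discrete energies is at most `C(β,Λ,γ) · m^{-1/γ}`. -/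
theorem green_energy_stability (X : Type*) [MetricSpace X] [CompactSpace X]
    (hdiam : ∀ x y : X, dist x y ≤ 1)
    (G : X → X → ℝ) (ϱ : X → X → ℝ) (Λ : NNReal)
    (hϱ : LipschitzWith Λ (fun z : X × X => ϱ z.1 z.2))
    (hG : ∀ x y : X, x ≠ y → G x y = Real.log (dist x y) + ϱ x y)
    (β γ : ℝ) (hβ : 0 < β) (hγ0 : 0 < γ) (hγ1 : γ ≤ 1) :
    ∃ C : ℝ, 0 < C ∧ ∀ (m : ℕ), 2 ≤ m → ∀ p q : Fin m → X,
      (∀ j k, j ≠ k → β * (m : ℝ) ^ (-(1 / γ)) ≤ dist (p j) (p k)) →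
      (∀ j k, j ≠ k → β * (m : ℝ) ^ (-(1 / γ)) ≤ dist (q j) (q k)) →
      (∀ j, dist (p j) (q j) ≤ (m : ℝ) ^ (-(2 / γ))) →
      (∀ j k, j ≠ k → |G (p j) (p k) - G (q j) (q k)| ≤ C * (m : ℝ) ^ (-(1 / γ))) ∧
      |(1 / (m : ℝ) ^ 2) * ∑ jk ∈ (Finset.univ : Finset (Fin m)).offDiag,
          G (p jk.1) (p jk.2)
        - (1 / (m : ℝ) ^ 2) * ∑ jk ∈ (Finset.univ : Finset (Fin m)).offDiag,
          G (q jk.1) (q jk.2)|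
        ≤ C * (m : ℝ) ^ (-(1 / γ)) := by
  refine ⟨2 / β + Λ, by positivity, ?_⟩
  intro m hm p q hp hq hpq
  have hm1 : (1 : ℝ) < m := by exact_mod_cast Nat.lt_of_lt_of_le Nat.one_lt_two hm
  have hm0 : (0 : ℝ) < m := lt_trans one_pos hm1
  set ε : ℝ := (m : ℝ) ^ (-(1 / γ)) with hεdef
  set δ : ℝ := (m : ℝ) ^ (-(2 / γ)) with hδdef
  have hε0 : 0 < ε := Real.rpow_pos_of_pos hm0 _
  have hδ0 : 0 < δ := Real.rpow_pos_of_pos hm0 _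
  have hδε2 : δ = ε * ε := by
    rw [hεdef, hδdef, ← Real.rpow_add hm0]; ring_nf
  have hδε : δ ≤ ε := by
    rw [hεdef, hδdef]
    exact Real.rpow_le_rpow_of_exponent_le hm1.le
      (by rw [neg_le_neg_iff]; gcongr; exact one_le_two)
  have hβε : 0 < β * ε := mul_pos hβ hε0
  have key : ∀ j k, j ≠ k → |G (p j) (p k) - G (q j) (q k)| ≤ (2 / β + Λ) * ε := by
    intro j k hjk
    have hdp := hp j k hjk
    have hdq := hq j k hjk
    have hpne : p j ≠ p k := by
      intro h; rw [h, dist_self] at hdp; exact absurd hdp (not_le.2 hβε)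
    have hqne : q j ≠ q k := by
      intro h; rw [h, dist_self] at hdq; exact absurd hdq (not_le.2 hβε)
    rw [hG _ _ hpne, hG _ _ hqne]
    have hlog : |Real.log (dist (p j) (p k)) - Real.log (dist (q j) (q k))|
        ≤ (2 / β) * ε := by
      have h1 : |dist (p j) (p k) - dist (q j) (q k)| ≤ 2 * δ := by
        have := dist_dist_dist_le (p j) (p k) (q j) (q k)
        rw [Real.dist_eq] at this
        calc |dist (p j) (p k) - dist (q j) (q k)|
            ≤ dist (p j) (q j) + dist (p k) (q k) := this
          _ ≤ δ + δ := add_le_add (hpq j) (hpq k)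
          _ = 2 * δ := by ring
      calc |Real.log (dist (p j) (p k)) - Real.log (dist (q j) (q k))|
          ≤ |dist (p j) (p k) - dist (q j) (q k)| / (β * ε) :=
            abs_log_sub_log_le_aux hβε hdp hdq
        _ ≤ 2 * δ / (β * ε) := by gcongr
        _ = (2 / β) * ε := by rw [hδε2]; field_simp
    have hϱ' : |ϱ (p j) (p k) - ϱ (q j) (q k)| ≤ (Λ : ℝ) * ε := by
      have := hϱ.dist_le_mul (p j, p k) (q j, q k)
      rw [Real.dist_eq] at this
      refine this.trans ?_
      have : dist ((p j, p k) : X × X) (q j, q k) ≤ δ :=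
        max_le (hpq j) (hpq k)
      calc (Λ : ℝ) * dist ((p j, p k) : X × X) (q j, q k) ≤ (Λ : ℝ) * δ := by
            gcongr
        _ ≤ (Λ : ℝ) * ε := by gcongr
    calc |Real.log (dist (p j) (p k)) + ϱ (p j) (p k)
          - (Real.log (dist (q j) (q k)) + ϱ (q j) (q k))|
        = |(Real.log (dist (p j) (p k)) - Real.log (dist (q j) (q k)))
          + (ϱ (p j) (p k) - ϱ (q j) (q k))| := by ring_nf
      _ ≤ |Real.log (dist (p j) (p k)) - Real.log (dist (q j) (q k))|
          + |ϱ (p j) (p k) - ϱ (q j) (q k)| := abs_add_le _ _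
      _ ≤ (2 / β) * ε + (Λ : ℝ) * ε := add_le_add hlog hϱ'
      _ = (2 / β + Λ) * ε := by ring
  refine ⟨key, ?_⟩
  rw [← mul_sub, ← Finset.sum_sub_distrib, abs_mul]
  have hcard : ((Finset.univ : Finset (Fin m)).offDiag.card : ℝ) ≤ (m : ℝ) ^ 2 := by
    have h1 : (Finset.univ : Finset (Fin m)).offDiag.card ≤ m * m := by
      rw [Finset.offDiag_card]
      simpa using Nat.sub_le (m * m) m
    calc ((Finset.univ : Finset (Fin m)).offDiag.card : ℝ) ≤ (m : ℝ) * m := by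
          exact_mod_cast h1
      _ = (m : ℝ) ^ 2 := by ring
  have hsum : |∑ jk ∈ (Finset.univ : Finset (Fin m)).offDiag,
      (G (p jk.1) (p jk.2) - G (q jk.1) (q jk.2))| ≤ (m : ℝ) ^ 2 * ((2 / β + Λ) * ε) := by
    calc |∑ jk ∈ (Finset.univ : Finset (Fin m)).offDiag,
        (G (p jk.1) (p jk.2) - G (q jk.1) (q jk.2))|
        ≤ ∑ jk ∈ (Finset.univ : Finset (Fin m)).offDiag,
          |G (p jk.1) (p jk.2) - G (q jk.1) (q jk.2)| := Finset.abs_sum_le_sum_abs _ _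
      _ ≤ ∑ _jk ∈ (Finset.univ : Finset (Fin m)).offDiag, (2 / β + Λ) * ε := by
          refine Finset.sum_le_sum fun jk hjk => ?_
          exact key jk.1 jk.2 (Finset.mem_offDiag.mp hjk).2.2
      _ = ((Finset.univ : Finset (Fin m)).offDiag.card : ℝ) * ((2 / β + Λ) * ε) := by
          rw [Finset.sum_const, nsmul_eq_mul]
      _ ≤ (m : ℝ) ^ 2 * ((2 / β + Λ) * ε) := by
          have hC : (0:ℝ) ≤ (2 / β + Λ) * ε := by positivity
          exact mul_le_mul_of_nonneg_right hcard hC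
  calc |1 / (m : ℝ) ^ 2| * |∑ jk ∈ (Finset.univ : Finset (Fin m)).offDiag,
        (G (p jk.1) (p jk.2) - G (q jk.1) (q jk.2))|
      ≤ (1 / (m : ℝ) ^ 2) * ((m : ℝ) ^ 2 * ((2 / β + Λ) * ε)) := by
        rw [abs_of_pos (by positivity : (0:ℝ) < 1 / (m:ℝ)^2)]
        gcongr
    _ = (2 / β + Λ) * ε := by field_simp
end
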